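/- arXiv:2503.09178 — 8 statements merged into one kernel-verified Lean document; each statement's English description precedes it below -/
import Mathlib

section
/- For every natural number k, the polynomial identity ((-1)^k / (2^k k!)) · d^k/dx^k [ (1-x)^k (1+x)^{k+1} ] = L_{k+1}(x) + L_k(x) holds in ℝ[x]; that is, (1+x)·J_k^{0,1}(x) = L_{k+1}(x) + L_k(x), where J_k^{0,1} is the Jacobi polynomial with parameters (0,1) given by its Rodrigues formula. -/
open Polynomial

/-- The `n`-th Legendre polynomial, via the Rodrigues formula. -/
noncomputable def legendre (n : ℕ) : Polynomial ℝ :=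
  ((1 : ℝ) / (2 ^ n * n.factorial)) • (⇑derivative)^[n] ((X ^ 2 - 1) ^ n)

/-- `(1+x) J_k^{0,1}(x) = L_{k+1}(x) + L_k(x)`, with `J_k^{0,1}` given by its
Rodrigues formula. -/
theorem jacobi_zero_one_eq_legendre_add (k : ℕ) :
    (((-1 : ℝ) ^ k / (2 ^ k * k.factorial)) •
        (⇑derivative)^[k] ((1 - X) ^ k * (1 + X) ^ (k + 1)))
      = legendre (k + 1) + legendre k := by
  have hpoly : ((1 : ℝ[X]) - X) ^ k * (1 + X) ^ (k + 1)
      = ((-1 : ℝ) ^ k) • ((X ^ 2 - 1) ^ k * (1 + X)) := by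
    have h1 : ((1 : ℝ[X]) - X) * (1 + X) = (-1) * (X ^ 2 - 1) := by ring
    calc ((1 : ℝ[X]) - X) ^ k * (1 + X) ^ (k + 1)
        = (((1 : ℝ[X]) - X) * (1 + X)) ^ k * (1 + X) := by
          rw [mul_pow, pow_succ]; ring
      _ = ((-1 : ℝ[X]) * (X ^ 2 - 1)) ^ k * (1 + X) := by rw [h1]
      _ = ((-1 : ℝ) ^ k) • ((X ^ 2 - 1) ^ k * (1 + X)) := by
          rw [mul_pow, smul_eq_C_mul, map_pow, map_neg, map_one, mul_assoc]
  have hder : (⇑derivative)^[k + 1] ((X ^ 2 - 1 : ℝ[X]) ^ (k + 1))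
      = ((2 * (k + 1) : ℝ)) • (⇑derivative)^[k] (X * (X ^ 2 - 1) ^ k) := by
    rw [Function.iterate_succ_apply, ← iterate_derivative_smul]
    congr 1
    rw [derivative_pow, smul_eq_C_mul]
    simp only [Nat.add_sub_cancel, derivative_sub, derivative_one, derivative_X_pow,
      Nat.cast_ofNat, pow_one, sub_zero, map_mul, map_ofNat, map_add, map_natCast, map_one]
    push_cast
    ring
  have hfac : ((k + 1).factorial : ℝ) = (k + 1) * k.factorial := by
    rw [Nat.factorial_succ]; push_cast; ring
  have hk : ((k : ℝ) + 1) ≠ 0 := by positivity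
  have hf : ((k.factorial : ℝ)) ≠ 0 := by
    exact_mod_cast Nat.factorial_ne_zero k
  have h2 : (2 : ℝ) ^ k ≠ 0 := by positivity
  rw [legendre, legendre, hpoly, iterate_derivative_smul, hder, smul_smul, smul_smul]
  have ha : (-1 : ℝ) ^ k / (2 ^ k * k.factorial) * (-1) ^ k
      = (1 : ℝ) / (2 ^ k * k.factorial) := by
    rw [div_mul_eq_mul_div, ← mul_pow]
    norm_num
  have hb : (1 : ℝ) / (2 ^ (k + 1) * (k + 1).factorial) * (2 * (k + 1))
      = (1 : ℝ) / (2 ^ k * k.factorial) := by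
    rw [hfac, pow_succ]
    field_simp
  have hadd : (⇑derivative)^[k] ((X : ℝ[X]) * (X ^ 2 - 1) ^ k) + (⇑derivative)^[k] ((X ^ 2 - 1 : ℝ[X]) ^ k)
      = (⇑derivative)^[k] ((X ^ 2 - 1 : ℝ[X]) ^ k * (1 + X)) := by
    rw [← iterate_map_add (f := (derivative : ℝ[X] →ₗ[ℝ] ℝ[X]))]
    congr 1
    ring
  rw [ha, hb, ← smul_add, hadd]
end

section
/- For every natural number k, the polynomial identity (1-x) · d/dx [ L_{k+1}(x) + L_k(x) ] = (k+1) · ((-1)^k / (2^k k!)) · d^k/dx^k [ (1-x)^{k+1} (1+x)^k ] holds in ℝ[x]; that is, the derivative of Φ_k(x) := L_{k+1}(x) + L_k(x) equals (k+1)·J_k^{1,0}(x), where J_k^{1,0} is the Jacobi polynomial with parameters (1,0) given by its Rodrigues formula. -/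
/-!
Write `u = (X² - 1)ᵏ` and `c = 1 / (2ᵏ k!)`. Rodrigues gives `L_k = c u⁽ᵏ⁾`, and since
`((X² - 1)ᵏ⁺¹)' = 2 (k + 1) X u` also `L_{k+1} = c (u X)⁽ᵏ⁾`. As
`(1 - X)ᵏ⁺¹ (1 + X)ᵏ = (-1)ᵏ u (1 - X)`, Leibniz expands both sides of the identity in
`u⁽ᵏ⁺¹⁾, u⁽ᵏ⁾, u⁽ᵏ⁻¹⁾`, and they agree by `(X² - 1) u⁽ᵏ⁺¹⁾ = k (k + 1) u⁽ᵏ⁻¹⁾`, which comes from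
computing `((X² - 1) u)⁽ᵏ⁺¹⁾` once by Leibniz and once through `((X² - 1) u)' = 2 (k + 1) X u`.
-/

open Polynomial

section

variable {R : Type*} [CommRing R]

theorem iterate_derivative_mul_X_sq_sub_one (n : ℕ) (p : R[X]) :
    derivative^[n] (p * (X ^ 2 - 1)) = derivative^[n] p * (X ^ 2 - 1)
      + (2 * n) • (derivative^[n - 1] p * X) + (n * (n - 1)) • derivative^[n - 2] p := by
  have hpX := iterate_derivative_mul_X (n := n - 1) p
  rw [Nat.sub_sub] at hpX
  rw [mul_sub, mul_one, sq, ← mul_assoc, iterate_derivative_sub, iterate_derivative_mul_X,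
    iterate_derivative_mul_X, hpX]
  simp only [nsmul_eq_mul]
  push_cast
  ring

theorem derivative_X_sq_sub_one_pow_succ (k : ℕ) :
    derivative ((X ^ 2 - 1 : R[X]) ^ (k + 1)) = (2 * (k + 1)) • ((X ^ 2 - 1) ^ k * X) := by
  rw [derivative_pow_succ, derivative_sub, derivative_X_sq, derivative_one, sub_zero, C_ofNat,
    ← Nat.cast_succ, C_eq_natCast, nsmul_eq_mul]
  push_cast
  ring

theorem iterate_derivative_X_sq_sub_one_pow_succ (k : ℕ) :
    derivative^[k + 1] ((X ^ 2 - 1 : R[X]) ^ (k + 1))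
      = (2 * (k + 1)) • derivative^[k] ((X ^ 2 - 1) ^ k * X) := by
  rw [Function.iterate_succ_apply, derivative_X_sq_sub_one_pow_succ, iterate_derivative_smul]

theorem X_sq_sub_one_mul_iterate_derivative_succ (k : ℕ) :
    (X ^ 2 - 1) * derivative^[k + 1] ((X ^ 2 - 1 : R[X]) ^ k)
      = (k * (k + 1)) • derivative^[k - 1] ((X ^ 2 - 1) ^ k) := by
  have leibniz := iterate_derivative_mul_X_sq_sub_one (k + 1) ((X ^ 2 - 1 : R[X]) ^ k)
  rw [← pow_succ, iterate_derivative_X_sq_sub_one_pow_succ, iterate_derivative_mul_X,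
    Nat.add_sub_cancel, show k + 1 - 2 = k - 1 by omega] at leibniz
  simp only [nsmul_eq_mul] at leibniz ⊢
  push_cast at leibniz ⊢
  linear_combination -leibniz

theorem one_sub_X_pow_succ_mul_one_add_X_pow (k : ℕ) :
    (1 - X : R[X]) ^ (k + 1) * (1 + X) ^ k = (-1 : R) ^ k • ((X ^ 2 - 1) ^ k * (1 - X)) := by
  rw [smul_eq_C_mul, map_pow, map_neg, map_one, pow_succ, mul_right_comm, ← mul_pow,
    show (1 - X : R[X]) * (1 + X) = -1 * (X ^ 2 - 1) by ring, mul_pow]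
  ring

theorem iterate_derivative_one_sub_X_pow_succ_mul_one_add_X_pow (k : ℕ) :
    derivative^[k] ((1 - X : R[X]) ^ (k + 1) * (1 + X) ^ k)
      = (-1 : R) ^ k • (derivative^[k] ((X ^ 2 - 1) ^ k) * (1 - X)
          - k • derivative^[k - 1] ((X ^ 2 - 1) ^ k)) := by
  rw [one_sub_X_pow_succ_mul_one_add_X_pow, iterate_derivative_smul, mul_one_sub,
    iterate_derivative_sub, iterate_derivative_mul_X, mul_one_sub, sub_sub]

end

theorem legendre_succ (k : ℕ) :
    legendre (k + 1)
      = ((1 : ℝ) / (2 ^ k * k.factorial)) • derivative^[k] ((X ^ 2 - 1) ^ k * X) := by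
  rw [legendre, iterate_derivative_X_sq_sub_one_pow_succ, ← Nat.cast_smul_eq_nsmul ℝ, smul_smul,
    Nat.factorial_succ]
  congr 1
  push_cast
  field_simp
  ring

theorem derivative_legendre_succ_add_legendre (k : ℕ) :
    derivative (legendre (k + 1) + legendre k)
      = ((1 : ℝ) / (2 ^ k * k.factorial)) •
          (derivative^[k + 1] ((X ^ 2 - 1) ^ k) * X + (k + 1) • derivative^[k] ((X ^ 2 - 1) ^ k)
            + derivative^[k + 1] ((X ^ 2 - 1) ^ k)) := by
  rw [legendre_succ, legendre, derivative_add, derivative_smul, derivative_smul,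
    ← Function.iterate_succ_apply' derivative, ← Function.iterate_succ_apply' derivative,
    iterate_derivative_mul_X, Nat.add_one_sub_one, ← smul_add]

/-- `(1-x) Φ_k'(x) = (k+1) (1-x) J_k^{1,0}(x)` where `Φ_k = L_{k+1} + L_k` and
`J_k^{1,0}` is given by its Rodrigues formula; i.e.
`(1-x) d/dx[L_{k+1}(x) + L_k(x)] = (k+1) ((-1)^k/(2^k k!)) d^k/dx^k[(1-x)^{k+1}(1+x)^k]`. -/
theorem deriv_phi_eq_jacobi_one_zero (k : ℕ) :
    (1 - X) * derivative (legendre (k + 1) + legendre k)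
      = (((k : ℝ) + 1) * ((-1 : ℝ) ^ k / (2 ^ k * k.factorial))) •
          (⇑derivative)^[k] ((1 - X) ^ (k + 1) * (1 + X) ^ k) := by
  set c : ℝ := 1 / (2 ^ k * k.factorial)
  set u : ℝ[X] := (X ^ 2 - 1) ^ k
  have h_scalar : ((k : ℝ) + 1) * ((-1) ^ k / (2 ^ k * k.factorial)) * (-1) ^ k = (k + 1) * c := by
    rw [mul_assoc, div_mul_eq_mul_div, ← pow_add, ← two_mul, pow_mul, neg_one_sq, one_pow]
  have key : (X ^ 2 - 1) * derivative^[k + 1] u = (k * (k + 1)) • derivative^[k - 1] u :=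
    X_sq_sub_one_mul_iterate_derivative_succ k
  rw [iterate_derivative_one_sub_X_pow_succ_mul_one_add_X_pow, smul_smul, h_scalar,
    derivative_legendre_succ_add_legendre]
  simp only [smul_eq_C_mul, nsmul_eq_mul, map_mul, map_add, map_one, map_natCast, Nat.cast_mul,
    Nat.cast_add, Nat.cast_one] at key ⊢
  linear_combination (-C c) * key
end

section
/- Let K be a natural number and a_0, a_1, …, a_K real numbers. Then ∫_{-1}^{1} ( Σ_{k=0}^{K} a_k Φ_k'(x) )^2 (1-x) dx = 2 Σ_{k=0}^{K} (k+1) a_k^2, where Φ_k(x) = L_{k+1}(x) + L_k(x) and Φ_k' denotes its derivative. -/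
/-!
By Rodrigues' formula and `n` integrations by parts, `L_n` is orthogonal on `[-1, 1]` to every
polynomial of degree `< n`. Since `Φ_k(-1) = 0` and `Φ_k(1) = 2`, one more integration by parts
gives `∫ Φ_k' q = 2 q(1)` for every `q` of degree `≤ k`. For `j < k` take `q = (1 - x) Φ_j'`,
which vanishes at `1`. For `j = k` the leading terms of `(1 - x) Φ_k'` and `-(k + 1) Φ_k` agree,
so `r = (1 - x) Φ_k' + (k + 1) Φ_k` has degree `≤ k` and
`∫ (1 - x) Φ_k'² = ∫ Φ_k' r - (k + 1) ∫ Φ_k' Φ_k = 4 (k + 1) - 2 (k + 1)`.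
Hence the `Φ_k'` are orthogonal for the weight `1 - x`, and expanding the square leaves the
diagonal terms.
-/

open Polynomial

/-- `Φ_k = L_{k+1} + L_k`. -/
noncomputable def Phi (k : ℕ) : Polynomial ℝ := legendre (k + 1) + legendre k

noncomputable def polyIntegral (a b : ℝ) : ℝ[X] →ₗ[ℝ] ℝ where
  toFun p := ∫ x in a..b, p.eval x
  map_add' p q := by
    simp only [eval_add]
    exact intervalIntegral.integral_add (p.continuous.intervalIntegrable _ _)
      (q.continuous.intervalIntegrable _ _)
  map_smul' c p := by
    simp only [eval_smul, smul_eq_mul, RingHom.id_apply]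
    exact intervalIntegral.integral_const_mul c _

lemma polyIntegral_apply (a b : ℝ) (p : ℝ[X]) :
    polyIntegral a b p = ∫ x in a..b, p.eval x :=
  rfl

section IntegrationByParts

variable (a b : ℝ)

lemma polyIntegral_derivative (p : ℝ[X]) :
    polyIntegral a b (derivative p) = p.eval b - p.eval a :=
  intervalIntegral.integral_eq_sub_of_hasDerivAt (fun x _ => p.hasDerivAt x)
    (p.derivative.continuous.intervalIntegrable _ _)

lemma polyIntegral_derivative_mul (p q : ℝ[X]) :
    polyIntegral a b (derivative p * q)
      = (p * q).eval b - (p * q).eval a - polyIntegral a b (p * derivative q) := by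
  rw [eq_sub_iff_add_eq, ← map_add, ← derivative_mul, polyIntegral_derivative]

lemma polyIntegral_iterate_derivative_mul (n : ℕ) (f q : ℝ[X])
    (hf : ∀ m < n, (derivative^[m] f).eval a = 0 ∧ (derivative^[m] f).eval b = 0) :
    polyIntegral a b (derivative^[n] f * q)
      = (-1) ^ n * polyIntegral a b (f * derivative^[n] q) := by
  induction n generalizing q with
  | zero => simp
  | succ n ih =>
    obtain ⟨ha, hb⟩ := hf n n.lt_succ_self
    rw [Function.iterate_succ_apply', polyIntegral_derivative_mul, eval_mul, eval_mul, ha, hb,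
      ih _ fun m hm => hf m (hm.trans n.lt_succ_self), Function.iterate_succ_apply]
    ring

end IntegrationByParts

lemma iterate_derivative_sq_sub_one_pow {n m : ℕ} (hm : m ≤ n) :
    ∃ r : ℝ[X], derivative^[m] ((X ^ 2 - 1) ^ n) = (X ^ 2 - 1) ^ (n - m) * r ∧
      ∀ x : ℝ, x ^ 2 = 1 → r.eval x = (2 * x) ^ m * n.descFactorial m := by
  induction m with
  | zero => exact ⟨1, by simp, by simp⟩
  | succ m ih =>
    obtain ⟨r, hr, hr_eval⟩ := ih (Nat.le_of_succ_le hm)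
    refine ⟨C ((n - m : ℕ) : ℝ) * (C 2 * X) * r + (X ^ 2 - 1) * derivative r, ?_,
      fun x hx => ?_⟩
    · obtain ⟨l, hl⟩ : ∃ l, n - m = l + 1 := ⟨n - (m + 1), by omega⟩
      rw [Function.iterate_succ_apply', hr, derivative_mul, derivative_pow, hl,
        show n - (m + 1) = l by omega]
      simp only [derivative_sub, derivative_X_pow, derivative_one]
      push_cast
      ring
    · simp only [eval_add, eval_mul, eval_C, eval_X, eval_sub, eval_pow, eval_one, hx, sub_self,
        hr_eval x hx, Nat.descFactorial_succ]
      push_cast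
      ring

lemma eval_iterate_derivative_sq_sub_one_pow_eq_zero {n m : ℕ} (hm : m < n) {x : ℝ}
    (hx : x ^ 2 = 1) : (derivative^[m] ((X ^ 2 - 1 : ℝ[X]) ^ n)).eval x = 0 := by
  obtain ⟨r, hr, -⟩ := iterate_derivative_sq_sub_one_pow hm.le
  rw [hr, eval_mul, eval_pow, eval_sub, eval_pow, eval_X, eval_one, hx, sub_self,
    zero_pow (by omega), zero_mul]

lemma legendre_eval_of_sq_eq_one (n : ℕ) {x : ℝ} (hx : x ^ 2 = 1) :
    (legendre n).eval x = x ^ n := by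
  obtain ⟨r, hr, hr_eval⟩ := iterate_derivative_sq_sub_one_pow (le_refl n)
  rw [legendre, eval_smul, hr, Nat.sub_self, pow_zero, one_mul, hr_eval x hx,
    Nat.descFactorial_self, smul_eq_mul, mul_pow]
  field_simp

lemma natDegree_legendre_le (n : ℕ) : (legendre n).natDegree ≤ n := by
  have hdeg : ((X ^ 2 - 1 : ℝ[X]) ^ n).natDegree ≤ n * 2 := by
    refine natDegree_pow_le_of_le (p := X ^ 2 - 1) n ?_
    simpa using (natDegree_X_pow_sub_C (R := ℝ) (n := 2) (r := 1)).le
  refine (natDegree_smul_le _ _).trans ((natDegree_iterate_derivative _ _).trans ?_)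
  omega

lemma polyIntegral_legendre_mul_derivative {n : ℕ} {q : ℝ[X]} (hq : q.natDegree ≤ n) :
    polyIntegral (-1) 1 (legendre n * derivative q) = 0 := by
  have hvanish (m : ℕ) (hm : m < n) :
      (derivative^[m] ((X ^ 2 - 1 : ℝ[X]) ^ n)).eval (-1) = 0 ∧
        (derivative^[m] ((X ^ 2 - 1 : ℝ[X]) ^ n)).eval 1 = 0 :=
    ⟨eval_iterate_derivative_sq_sub_one_pow_eq_zero hm (by norm_num),
      eval_iterate_derivative_sq_sub_one_pow_eq_zero hm (by norm_num)⟩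
  rw [legendre, smul_mul_assoc, map_smul, polyIntegral_iterate_derivative_mul _ _ n _ _ hvanish,
    ← Function.iterate_succ_apply, iterate_derivative_eq_zero (Nat.lt_succ_of_le hq)]
  simp

lemma Phi_eval_one (k : ℕ) : (Phi k).eval 1 = 2 := by
  rw [Phi, eval_add, legendre_eval_of_sq_eq_one _ (one_pow 2),
    legendre_eval_of_sq_eq_one _ (one_pow 2)]
  norm_num

lemma Phi_eval_neg_one (k : ℕ) : (Phi k).eval (-1) = 0 := by
  rw [Phi, eval_add, legendre_eval_of_sq_eq_one _ (by norm_num),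
    legendre_eval_of_sq_eq_one _ (by norm_num), pow_succ]
  ring

lemma natDegree_Phi_le (k : ℕ) : (Phi k).natDegree ≤ k + 1 :=
  natDegree_add_le_of_degree_le (natDegree_legendre_le _)
    ((natDegree_legendre_le k).trans k.le_succ)

lemma polyIntegral_derivative_Phi_mul {k : ℕ} {q : ℝ[X]} (hq : q.natDegree ≤ k) :
    polyIntegral (-1) 1 (derivative (Phi k) * q) = 2 * q.eval 1 := by
  have horth : polyIntegral (-1) 1 (Phi k * derivative q) = 0 := by
    rw [Phi, add_mul, map_add, polyIntegral_legendre_mul_derivative (hq.trans k.le_succ),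
      polyIntegral_legendre_mul_derivative hq, add_zero]
  rw [polyIntegral_derivative_mul, horth, eval_mul, eval_mul, Phi_eval_one, Phi_eval_neg_one]
  ring

lemma polyIntegral_derivative_Phi_mul_Phi (k : ℕ) :
    polyIntegral (-1) 1 (derivative (Phi k) * Phi k) = 2 := by
  have h := polyIntegral_derivative_mul (-1) 1 (Phi k) (Phi k)
  rw [mul_comm (Phi k) (derivative _), eval_mul, eval_mul, Phi_eval_one, Phi_eval_neg_one] at h
  linarith

lemma natDegree_one_sub_X_mul_derivative_add_le {R : Type*} [CommRing R] {p : R[X]} {n : ℕ}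
    (hp : p.natDegree ≤ n + 1) :
    ((1 - X) * derivative p + C ((n : R) + 1) * p).natDegree ≤ n := by
  rw [natDegree_le_iff_coeff_eq_zero]
  intro N hN
  obtain ⟨M, rfl⟩ : ∃ M, N = M + 1 := ⟨N - 1, by omega⟩
  have htop : p.coeff (M + 2) = 0 := coeff_eq_zero_of_natDegree_lt (by omega)
  simp only [sub_mul, one_mul, coeff_add, coeff_sub, coeff_X_mul, coeff_C_mul, coeff_derivative,
    htop]
  rcases (show M = n ∨ n < M by omega) with rfl | hM
  · push_cast
    ring
  · rw [coeff_eq_zero_of_natDegree_lt (show p.natDegree < M + 1 by omega)]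
    ring

lemma polyIntegral_one_sub_X_mul_derivative_Phi_mul_of_lt {j k : ℕ} (hjk : j < k) :
    polyIntegral (-1) 1 ((1 - X) * derivative (Phi j) * derivative (Phi k)) = 0 := by
  have hdeg : ((1 - X) * derivative (Phi j)).natDegree ≤ k := by
    have h1 : (1 - X : ℝ[X]).natDegree ≤ 1 := (natDegree_sub_le _ _).trans (by simp)
    have h2 : (derivative (Phi j)).natDegree ≤ j :=
      (natDegree_derivative_le _).trans (Nat.sub_le_of_le_add (natDegree_Phi_le j))
    exact natDegree_mul_le.trans (by omega)
  rw [mul_comm, polyIntegral_derivative_Phi_mul hdeg]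
  simp

lemma polyIntegral_one_sub_X_mul_derivative_Phi_sq (k : ℕ) :
    polyIntegral (-1) 1 ((1 - X) * derivative (Phi k) * derivative (Phi k)) = 2 * (k + 1) := by
  set r := (1 - X) * derivative (Phi k) + C ((k : ℝ) + 1) * Phi k with hr
  have hsplit : (1 - X) * derivative (Phi k) * derivative (Phi k)
      = derivative (Phi k) * r - ((k : ℝ) + 1) • (derivative (Phi k) * Phi k) := by
    rw [hr, smul_eq_C_mul]
    ring
  have hr_deg : r.natDegree ≤ k := natDegree_one_sub_X_mul_derivative_add_le (natDegree_Phi_le k)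
  have hr_one : r.eval 1 = ((k : ℝ) + 1) * 2 := by
    simp [r, Phi_eval_one]
  rw [hsplit, map_sub, map_smul, polyIntegral_derivative_Phi_mul hr_deg, hr_one,
    polyIntegral_derivative_Phi_mul_Phi, smul_eq_mul]
  ring

lemma polyIntegral_one_sub_X_mul_derivative_Phi_mul (j k : ℕ) :
    polyIntegral (-1) 1 ((1 - X) * derivative (Phi j) * derivative (Phi k))
      = if j = k then 2 * ((k : ℝ) + 1) else 0 := by
  rcases lt_trichotomy j k with h | rfl | h
  · rw [if_neg h.ne, polyIntegral_one_sub_X_mul_derivative_Phi_mul_of_lt h]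
  · rw [if_pos rfl, polyIntegral_one_sub_X_mul_derivative_Phi_sq]
  · rw [if_neg h.ne', mul_right_comm, polyIntegral_one_sub_X_mul_derivative_Phi_mul_of_lt h]

lemma LinearMap.map_sum_smul_sq_mul {R A ι : Type*} [CommRing R] [CommRing A] [Algebra R A]
    [DecidableEq ι] (L : A →ₗ[R] R) (w : A) (f : ι → A) (c : ι → R) (s : Finset ι)
    (horth : ∀ j ∈ s, ∀ k ∈ s, L (w * f j * f k) = if j = k then c k else 0) (a : ι → R) :
    L ((∑ k ∈ s, a k • f k) ^ 2 * w) = ∑ k ∈ s, a k ^ 2 * c k := by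
  have hexpand : (∑ k ∈ s, a k • f k) ^ 2 * w
      = ∑ j ∈ s, ∑ k ∈ s, (a j * a k) • (w * f j * f k) := by
    rw [sq, Finset.sum_mul_sum, Finset.sum_mul]
    refine Finset.sum_congr rfl fun j _ => ?_
    rw [Finset.sum_mul]
    refine Finset.sum_congr rfl fun k _ => ?_
    rw [smul_mul_smul_comm, smul_mul_assoc, mul_comm _ w, ← mul_assoc]
  rw [hexpand, map_sum]
  refine Finset.sum_congr rfl fun j hj => ?_
  rw [map_sum, Finset.sum_congr rfl fun k hk => by
    rw [map_smul, horth j hj k hk, smul_eq_mul, mul_ite, mul_zero]]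
  rw [Finset.sum_ite_eq s j, if_pos hj, sq]

/-- The squared weighted `L²`-norm with Jacobi weight `ω^{1,0}(x) = 1-x` of
`Σ_{k=0}^K a_k Φ_k'` equals `2 Σ_{k=0}^K (k+1) a_k²`. -/
theorem weighted_norm_phi_deriv_expansion (K : ℕ) (a : ℕ → ℝ) :
    ∫ x in (-1 : ℝ)..1,
        (∑ k ∈ Finset.range (K + 1), a k * (derivative (Phi k)).eval x) ^ 2 * (1 - x)
      = 2 * ∑ k ∈ Finset.range (K + 1), ((k : ℝ) + 1) * (a k) ^ 2 := by
  have h := (polyIntegral (-1) 1).map_sum_smul_sq_mul (1 - X) (fun k => derivative (Phi k))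
    (fun k => 2 * ((k : ℝ) + 1)) (Finset.range (K + 1))
    (fun j _ k _ => polyIntegral_one_sub_X_mul_derivative_Phi_mul j k) a
  simp only [polyIntegral_apply, eval_mul, eval_pow, eval_finsetSum, eval_smul, smul_eq_mul,
    eval_sub, eval_one, eval_X] at h
  rw [h, Finset.mul_sum]
  exact Finset.sum_congr rfl fun k _ => by ring
end

section
/- Let N be a natural number and let u : [-1,1] → ℝ be Lebesgue integrable. Then there exists a unique real polynomial p of degree at most N such that p(-1) = 0 and ∫_{-1}^{1} (u(x) - p(x)) q(x) dx = 0 for every real polynomial q of degree at most N-1. -/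
open MeasureTheory Polynomial Set

noncomputable section PG

private lemma pg_contI (p q : Polynomial ℝ) :
    IntervalIntegrable (fun x => (x + 1) * p.eval x * q.eval x) volume (-1) 1 :=
  (((continuous_id.add continuous_const).mul p.continuous_aeval).mul
    q.continuous_aeval).intervalIntegrable _ _

private lemma pg_uI (u : ℝ → ℝ) (hu : IntervalIntegrable u volume (-1) 1) (q : Polynomial ℝ) :
    IntervalIntegrable (fun x => u x * q.eval x) volume (-1) 1 :=
  hu.mul_continuousOn q.continuous_aeval.continuousOn

private instance (N : ℕ) : FiniteDimensional ℝ (degreeLT ℝ N) :=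
  Module.Finite.equiv (degreeLTEquiv ℝ N).symm

private def pgB (N : ℕ) : degreeLT ℝ N →ₗ[ℝ] Module.Dual ℝ (degreeLT ℝ N) :=
  LinearMap.mk₂ ℝ
    (fun r q => ∫ x in (-1:ℝ)..1, (x + 1) * eval x (r : ℝ[X]) * eval x (q : ℝ[X]))
    (by
      intro r1 r2 q
      simp only [Submodule.coe_add, eval_add]
      rw [← intervalIntegral.integral_add (pg_contI _ _) (pg_contI _ _)]
      congr 1; ext x; ring)
    (by
      intro c r q
      simp only [SetLike.val_smul, eval_smul, smul_eq_mul]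
      rw [← intervalIntegral.integral_const_mul]
      congr 1; ext x; ring)
    (by
      intro r q1 q2
      simp only [Submodule.coe_add, eval_add]
      rw [← intervalIntegral.integral_add (pg_contI _ _) (pg_contI _ _)]
      congr 1; ext x; ring)
    (by
      intro c r q
      simp only [SetLike.val_smul, eval_smul, smul_eq_mul]
      rw [← intervalIntegral.integral_const_mul]
      congr 1; ext x; ring)

private def pgL (N : ℕ) (u : ℝ → ℝ) (hu : IntervalIntegrable u volume (-1) 1) :
    Module.Dual ℝ (degreeLT ℝ N) where
  toFun q := ∫ x in (-1:ℝ)..1, u x * eval x (q : ℝ[X])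
  map_add' q1 q2 := by
    simp only [Submodule.coe_add, eval_add]
    rw [← intervalIntegral.integral_add (pg_uI u hu _) (pg_uI u hu _)]
    congr 1; ext x; ring
  map_smul' c q := by
    simp only [SetLike.val_smul, eval_smul, smul_eq_mul, RingHom.id_apply]
    rw [← intervalIntegral.integral_const_mul]
    congr 1; ext x; ring

private lemma pg_pos (r : Polynomial ℝ) (hr : r ≠ 0) :
    0 < ∫ x in (-1:ℝ)..1, (x + 1) * r.eval x * r.eval x := by
  set f : ℝ → ℝ := fun x => (x + 1) * r.eval x * r.eval x with hf
  have hfi : IntervalIntegrable f volume (-1) 1 := pg_contI r r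
  rw [intervalIntegral.integral_pos_iff_support_of_nonneg_ae' ?_ hfi]
  · refine ⟨by norm_num, ?_⟩
    have hroots : ({x : ℝ | r.IsRoot x}).Finite := by
      have hsub : {x : ℝ | r.IsRoot x} ⊆ (r.roots.toFinset : Set ℝ) := fun x hx => by
        simp [Multiset.mem_toFinset, mem_roots, hr]; exact hx
      exact Set.Finite.subset r.roots.toFinset.finite_toSet hsub
    have hsub : Ioo (-1:ℝ) 1 \ {x : ℝ | r.IsRoot x} ⊆ Function.support f ∩ Ioc (-1) 1 := by
      rintro x ⟨hx, hx'⟩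
      refine ⟨?_, hx.1, hx.2.le⟩
      have h1 : (0:ℝ) < x + 1 := by linarith [hx.1]
      have h2 : r.eval x ≠ 0 := hx'
      simp only [Function.mem_support, hf]
      positivity
    calc (0:ENNReal) < volume (Ioo (-1:ℝ) 1) := by simp [Real.volume_Ioo]
      _ = volume (Ioo (-1:ℝ) 1 \ {x : ℝ | r.IsRoot x}) :=
          (measure_diff_null (hroots.measure_zero volume)).symm
      _ ≤ _ := measure_mono hsub
  · have : Set.uIoc (-1:ℝ) 1 = Set.Ioc (-1) 1 := Set.uIoc_of_le (by norm_num)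
    rw [this]
    filter_upwards [ae_restrict_mem measurableSet_Ioc] with x hx
    have h1 : (0:ℝ) ≤ x + 1 := by linarith [hx.1]
    simp only [hf, Pi.zero_apply]
    nlinarith [sq_nonneg (r.eval x)]

private lemma pgB_bijective (N : ℕ) : Function.Bijective (pgB N) := by
  have hinj : Function.Injective (pgB N) := by
    rw [← LinearMap.ker_eq_bot]
    apply LinearMap.ker_eq_bot'.2
    intro r hr
    by_contra hne
    have h0 : (r : ℝ[X]) ≠ 0 := fun h => hne (Subtype.ext h)
    have hpos := pg_pos (r : ℝ[X]) h0
    have h2 : pgB N r r = 0 := by rw [hr]; rfl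
    have h3 : pgB N r r = ∫ x in (-1:ℝ)..1, (x + 1) * eval x (r:ℝ[X]) * eval x (r:ℝ[X]) := rfl
    rw [h3] at h2
    linarith
  exact ⟨hinj, (LinearMap.injective_iff_surjective_of_finrank_eq_finrank
    (Subspace.dual_finrank_eq).symm).1 hinj⟩

private lemma pg_deg {N : ℕ} {s : ℝ[X]} (h : s.degree < (N : WithBot ℕ)) : ((X + C 1) * s).degree ≤ (N : WithBot ℕ) := by
  rcases eq_or_ne s 0 with rfl | hs
  · simp
  · rw [degree_mul, degree_X_add_C, degree_eq_natDegree hs]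
    rw [degree_eq_natDegree hs] at h
    have h1 : s.natDegree < N := by exact_mod_cast h
    have h2 : 1 + s.natDegree ≤ N := by omega
    exact_mod_cast h2

private lemma pg_deg' {N : ℕ} {s : ℝ[X]} (h : ((X + C 1) * s).degree ≤ (N : WithBot ℕ)) : s.degree < (N : WithBot ℕ) := by
  rcases eq_or_ne s 0 with rfl | hs
  · rw [degree_zero]
    exact_mod_cast WithBot.bot_lt_coe N
  · rw [degree_mul, degree_X_add_C, degree_eq_natDegree hs] at h
    rw [degree_eq_natDegree hs]
    have h1 : 1 + s.natDegree ≤ N := by exact_mod_cast h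
    have h2 : s.natDegree < N := by omega
    exact_mod_cast h2

end PG

/-- Well-definedness of the Petrov–Galerkin projection `_0π_N`: for every integrable
`u` on `[-1,1]` there is a unique polynomial `p` of degree at most `N` with `p(-1) = 0`
such that `u - p` is `L²(-1,1)`-orthogonal to all polynomials of degree at most `N-1`. -/
theorem petrov_galerkin_projection_exists_unique (N : ℕ) (u : ℝ → ℝ)
    (hu : IntervalIntegrable u volume (-1) 1) :
    ∃! p : Polynomial ℝ, p.degree ≤ N ∧ p.eval (-1) = 0 ∧
      ∀ q : Polynomial ℝ, q.degree < N →
        ∫ x in (-1 : ℝ)..1, (u x - p.eval x) * q.eval x = 0 := by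
  obtain ⟨r, hr⟩ := (pgB_bijective N).surjective (pgL N u hu)
  have hrd : (r : ℝ[X]).degree < N := mem_degreeLT.1 r.2
  refine ⟨(X + C 1) * (r : ℝ[X]), ⟨pg_deg hrd, by simp, ?_⟩, ?_⟩
  · intro q hq
    have hq' : q ∈ degreeLT ℝ N := mem_degreeLT.2 hq
    have key : (pgB N r) ⟨q, hq'⟩ = (pgL N u hu) ⟨q, hq'⟩ := by rw [hr]
    have hB : (pgB N r) ⟨q, hq'⟩ =
        ∫ x in (-1:ℝ)..1, (x + 1) * eval x (r:ℝ[X]) * eval x q := rfl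
    have hL : (pgL N u hu) ⟨q, hq'⟩ = ∫ x in (-1:ℝ)..1, u x * eval x q := rfl
    have heq : ∀ x : ℝ, (u x - eval x ((X + C 1) * (r:ℝ[X]))) * eval x q =
        u x * eval x q - (x + 1) * eval x (r:ℝ[X]) * eval x q := by
      intro x; simp [eval_mul]; ring
    calc ∫ x in (-1:ℝ)..1, (u x - eval x ((X + C 1) * (r:ℝ[X]))) * eval x q
        = ∫ x in (-1:ℝ)..1,
            (u x * eval x q - (x + 1) * eval x (r:ℝ[X]) * eval x q) := by
          simp only [heq]
      _ = (∫ x in (-1:ℝ)..1, u x * eval x q)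
            - ∫ x in (-1:ℝ)..1, (x + 1) * eval x (r:ℝ[X]) * eval x q :=
          intervalIntegral.integral_sub (pg_uI u hu q) (pg_contI _ q)
      _ = 0 := by rw [← hB, ← hL, key, sub_self]
  · rintro p' ⟨hdeg', hev', horth'⟩
    obtain ⟨s, hs⟩ : (X + C 1) ∣ p' := by
      have h := dvd_iff_isRoot.2 hev'
      rwa [map_neg, sub_neg_eq_add] at h
    rw [hs] at hdeg'
    have hsd : s.degree < N := pg_deg' hdeg'
    set sW : degreeLT ℝ N := ⟨s, mem_degreeLT.2 hsd⟩ with hsW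
    have hBs : pgB N sW = pgL N u hu := by
      apply LinearMap.ext
      intro q
      have hB : (pgB N sW) q =
          ∫ x in (-1:ℝ)..1, (x + 1) * eval x s * eval x (q:ℝ[X]) := rfl
      have hL : (pgL N u hu) q = ∫ x in (-1:ℝ)..1, u x * eval x (q:ℝ[X]) := rfl
      have horth := horth' (q:ℝ[X]) (mem_degreeLT.1 q.2)
      rw [hs] at horth
      have heq : ∀ x : ℝ, (u x - eval x ((X + C 1) * s)) * eval x (q:ℝ[X]) =
          u x * eval x (q:ℝ[X]) - (x + 1) * eval x s * eval x (q:ℝ[X]) := by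
        intro x; simp [eval_mul]; ring
      rw [hB, hL]
      have := calc (∫ x in (-1:ℝ)..1, u x * eval x (q:ℝ[X]))
            - ∫ x in (-1:ℝ)..1, (x + 1) * eval x s * eval x (q:ℝ[X])
          = ∫ x in (-1:ℝ)..1,
              (u x * eval x (q:ℝ[X]) - (x + 1) * eval x s * eval x (q:ℝ[X])) :=
            (intervalIntegral.integral_sub (pg_uI u hu _) (pg_contI _ _)).symm
        _ = ∫ x in (-1:ℝ)..1, (u x - eval x ((X + C 1) * s)) * eval x (q:ℝ[X]) := by
            simp only [heq]
        _ = 0 := horth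
      linarith
    have : sW = r := (pgB_bijective N).injective (by rw [hBs, hr])
    rw [hs, show s = (sW : ℝ[X]) from rfl, this]
end

section
/- Let M be a natural number, c > 0, and for indices 0 ≤ i, m ≤ M let ω_m > 0 be weights, T_m real numbers, and S_{i,m} ≥ 0 nonnegative reals. Assume that for every m, T_m - (1/2) Σ_{i=0}^{M} ω_i S_{i,m} ≥ c/2, and that for every i, T_i - (1/2) Σ_{m=0}^{M} ω_m S_{i,m} ≥ c/2. Then for every vector (ψ_0, …, ψ_M) of real numbers, | Σ_{m=0}^{M} Σ_{i=0}^{M} ω_m ω_i S_{i,m} ψ_i ψ_m | ≤ 2 Σ_{m=0}^{M} ω_m T_m ψ_m^2 - c Σ_{m=0}^{M} ω_m ψ_m^2. -/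
/-- Discrete Cauchy–Schwarz bound for the scattering term: under the discrete
subcriticality assumptions on `T` (total cross section values) and `S ≥ 0`
(scattering cross section values) with positive quadrature weights `ω`, for any
vector `ψ`,
`|Σ_m Σ_i ω_m ω_i S_{i,m} ψ_i ψ_m| ≤ 2 Σ_m ω_m T_m ψ_m² - c Σ_m ω_m ψ_m²`. -/
theorem discrete_scattering_bound (M : ℕ) (c : ℝ) (hc : 0 < c)
    (ω T : Fin (M + 1) → ℝ) (S : Fin (M + 1) → Fin (M + 1) → ℝ)
    (hω : ∀ m, 0 < ω m) (hS : ∀ i m, 0 ≤ S i m)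
    (hsub1 : ∀ m, T m - (1 / 2) * ∑ i, ω i * S i m ≥ c / 2)
    (hsub2 : ∀ i, T i - (1 / 2) * ∑ m, ω m * S i m ≥ c / 2)
    (ψ : Fin (M + 1) → ℝ) :
    |∑ m, ∑ i, ω m * ω i * S i m * ψ i * ψ m|
      ≤ 2 * ∑ m, ω m * T m * ψ m ^ 2 - c * ∑ m, ω m * ψ m ^ 2 := by
  have habs : |∑ m, ∑ i, ω m * ω i * S i m * ψ i * ψ m|
      ≤ ∑ m, ∑ i, ω m * ω i * S i m * ((ψ i ^ 2 + ψ m ^ 2) / 2) := by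
    refine (Finset.abs_sum_le_sum_abs _ _).trans ?_
    refine Finset.sum_le_sum fun m _ => ?_
    refine (Finset.abs_sum_le_sum_abs _ _).trans ?_
    refine Finset.sum_le_sum fun i _ => ?_
    have h0 : 0 ≤ ω m * ω i * S i m :=
      mul_nonneg (mul_nonneg (hω m).le (hω i).le) (hS i m)
    have h1 : |ω m * ω i * S i m * ψ i * ψ m|
        = (ω m * ω i * S i m) * |ψ i * ψ m| := by
      rw [mul_assoc, abs_mul, abs_of_nonneg h0]
    rw [h1]
    refine mul_le_mul_of_nonneg_left ?_ h0
    rcases abs_cases (ψ i * ψ m) with ⟨h, _⟩ | ⟨h, _⟩ <;> rw [h] <;>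
      nlinarith [sq_nonneg (ψ i - ψ m), sq_nonneg (ψ i + ψ m)]
  have hA : ∑ m, ∑ i, ω m * ω i * S i m * (ψ i ^ 2)
      ≤ ∑ i, ω i * ψ i ^ 2 * (2 * T i - c) := by
    rw [Finset.sum_comm]
    refine Finset.sum_le_sum fun i _ => ?_
    have : ∑ m, ω m * ω i * S i m * ψ i ^ 2
        = (ω i * ψ i ^ 2) * ∑ m, ω m * S i m := by
      rw [Finset.mul_sum]; exact Finset.sum_congr rfl fun m _ => by ring
    rw [this]
    have hle : ∑ m, ω m * S i m ≤ 2 * T i - c := by linarith [hsub2 i]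
    have hnn : 0 ≤ ω i * ψ i ^ 2 := mul_nonneg (hω i).le (sq_nonneg _)
    exact mul_le_mul_of_nonneg_left hle hnn
  have hB : ∑ m, ∑ i, ω m * ω i * S i m * (ψ m ^ 2)
      ≤ ∑ m, ω m * ψ m ^ 2 * (2 * T m - c) := by
    refine Finset.sum_le_sum fun m _ => ?_
    have : ∑ i, ω m * ω i * S i m * ψ m ^ 2
        = (ω m * ψ m ^ 2) * ∑ i, ω i * S i m := by
      rw [Finset.mul_sum]; exact Finset.sum_congr rfl fun i _ => by ring
    rw [this]
    have hle : ∑ i, ω i * S i m ≤ 2 * T m - c := by linarith [hsub1 m]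
    have hnn : 0 ≤ ω m * ψ m ^ 2 := mul_nonneg (hω m).le (sq_nonneg _)
    exact mul_le_mul_of_nonneg_left hle hnn
  have hsplit : ∑ m, ∑ i, ω m * ω i * S i m * ((ψ i ^ 2 + ψ m ^ 2) / 2)
      = (1 / 2) * ((∑ m, ∑ i, ω m * ω i * S i m * (ψ i ^ 2))
        + (∑ m, ∑ i, ω m * ω i * S i m * (ψ m ^ 2))) := by
    rw [← Finset.sum_add_distrib, Finset.mul_sum]
    refine Finset.sum_congr rfl fun m _ => ?_
    rw [← Finset.sum_add_distrib, Finset.mul_sum]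
    exact Finset.sum_congr rfl fun i _ => by ring
  have hRHS : 2 * ∑ m, ω m * T m * ψ m ^ 2 - c * ∑ m, ω m * ψ m ^ 2
      = ∑ m, ω m * ψ m ^ 2 * (2 * T m - c) := by
    rw [Finset.mul_sum, Finset.mul_sum, ← Finset.sum_sub_distrib]
    exact Finset.sum_congr rfl fun m _ => by ring
  rw [hRHS]
  calc |∑ m, ∑ i, ω m * ω i * S i m * ψ i * ψ m|
      ≤ ∑ m, ∑ i, ω m * ω i * S i m * ((ψ i ^ 2 + ψ m ^ 2) / 2) := habs
    _ = (1 / 2) * ((∑ m, ∑ i, ω m * ω i * S i m * (ψ i ^ 2))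
        + (∑ m, ∑ i, ω m * ω i * S i m * (ψ m ^ 2))) := hsplit
    _ ≤ (1 / 2) * ((∑ i, ω i * ψ i ^ 2 * (2 * T i - c))
        + (∑ m, ω m * ψ m ^ 2 * (2 * T m - c))) := by
        refine mul_le_mul_of_nonneg_left (add_le_add hA hB) (by norm_num)
    _ = ∑ m, ω m * ψ m ^ 2 * (2 * T m - c) := by ring
end

section
/- Let M be a natural number, let μ_0, …, μ_M ∈ (-1,1) and ω_0, …, ω_M > 0 satisfy Σ_{m=0}^{M} ω_m p(μ_m) = ∫_{-1}^{1} p(μ) dμ for every polynomial p of degree at most 2M+1. Let c > 0, let Σ_t : [-1,1] × [-1,1] → ℝ be continuous and Σ_s : [-1,1] × [-1,1] × [-1,1] → ℝ be continuous and nonnegative, and assume the discrete subcriticality conditions: for all x ∈ [-1,1] and all 0 ≤ m, i ≤ M, Σ_t(x,μ_m) - (1/2) Σ_{i=0}^{M} ω_i Σ_s(x,μ_i,μ_m) ≥ c/2 and Σ_t(x,μ_i) - (1/2) Σ_{m=0}^{M} ω_m Σ_s(x,μ_i,μ_m) ≥ c/2. Let ψ(x,μ) = Σ_{j=0}^{M}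 c_j(x) μ^j with each c_j : [-1,1] → ℝ continuously differentiable, and suppose ψ(-1,μ_m) = 0 whenever μ_m > 0 and ψ(1,μ_m) = 0 whenever μ_m < 0. Then Σ_{m=0}^{M} ω_m ∫_{-1}^{1} [ μ_m (∂_x ψ)(x,μ_m) ψ(x,μ_m) + Σ_t(x,μ_m) ψ(x,μ_m)^2 - (1/2) Σ_{i=0}^{M} ω_i Σ_s(x,μ_i,μ_m) ψ(x,μ_i) ψ(x,μ_m) ] dx ≥ (c/2) ∫_{-1}^{1} ∫_{-1}^{1} ψ(x,μ)^2 dμ dx + (1/2) Σ_{m=0}^{M} ω_m |μ_m| ψ(sign(μ_m), μ_m)^2. -/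
/-!
Integrating `μ ∂ₓψ ψ` by parts leaves only the boundary values `μ (ψ(1)² - ψ(-1)²) / 2`; the
inflow conditions kill the incoming half, leaving the outflow term `|μ| ψ(sign μ)² / 2`. The
scattering part is estimated pointwise in `x` by `2ab ≤ a² + b²`: the two subcriticality
conditions bound the row and the column sums of the scattering matrix, which leaves
`(c/2) Σ ω_m ψ(x, μ_m)²`. Finally `ψ(x, ·)²` has degree `≤ 2M`, so the quadrature turns this
discrete norm into `∫ ψ(x, ν)² dν`.
-/

open MeasureTheory Polynomial Set

open Finset in
theorem sum_sum_mul_mul_le_of_nonneg {ι : Type*} [Fintype ι] (K : ι → ι → ℝ)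
    (hK : ∀ i j, 0 ≤ K i j) (v : ι → ℝ) :
    ∑ i, ∑ j, K i j * v i * v j ≤ ∑ i, (∑ j, K i j + ∑ j, K j i) / 2 * v i ^ 2 := by
  calc ∑ i, ∑ j, K i j * v i * v j
      ≤ ∑ i, ∑ j, (K i j * v i ^ 2 / 2 + K i j * v j ^ 2 / 2) :=
        sum_le_sum fun i _ => sum_le_sum fun j _ => by
          nlinarith [mul_nonneg (hK i j) (sq_nonneg (v i - v j))]
    _ = ∑ i, (∑ j, K i j + ∑ j, K j i) / 2 * v i ^ 2 := by
        rw [sum_congr rfl fun i _ => sum_add_distrib, sum_add_distrib,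
          sum_comm (f := fun i j => K i j * v j ^ 2 / 2), ← sum_add_distrib]
        refine sum_congr rfl fun i _ => ?_
        rw [add_div, add_mul, sum_div, sum_div, sum_mul, sum_mul]
        congr 1 <;> exact sum_congr rfl fun j _ => by ring

open Finset in
theorem discrete_collision_coercive {ι : Type*} [Fintype ι] (ω : ι → ℝ) (hω : ∀ m, 0 ≤ ω m)
    (s : ι → ι → ℝ) (hs : ∀ i m, 0 ≤ s i m) (t : ι → ℝ) (c : ℝ)
    (h1 : ∀ m, t m - 1 / 2 * ∑ i, ω i * s i m ≥ c / 2)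
    (h2 : ∀ i, t i - 1 / 2 * ∑ m, ω m * s i m ≥ c / 2) (v : ι → ℝ) :
    c / 2 * ∑ m, ω m * v m ^ 2
      ≤ ∑ m, ω m * (t m * v m ^ 2 - 1 / 2 * ∑ i, ω i * s i m * v i * v m) := by
  have hK : ∑ m, ∑ i, ω m * ω i * s i m * v m * v i ≤
      ∑ m, (∑ i, ω m * ω i * s i m + ∑ i, ω i * ω m * s m i) / 2 * v m ^ 2 :=
    sum_sum_mul_mul_le_of_nonneg (fun m i => ω m * ω i * s i m)
      (fun m i => mul_nonneg (mul_nonneg (hω m) (hω i)) (hs i m)) v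
  have hform : ∑ m, ω m * (t m * v m ^ 2 - 1 / 2 * ∑ i, ω i * s i m * v i * v m)
      = ∑ m, ω m * t m * v m ^ 2 - 1 / 2 * ∑ m, ∑ i, ω m * ω i * s i m * v m * v i := by
    rw [mul_sum, ← sum_sub_distrib]
    refine sum_congr rfl fun m _ => ?_
    rw [mul_sub, mul_sum, mul_sum, mul_sum]
    congr 1
    · ring
    · exact sum_congr rfl fun i _ => by ring
  have hdiag : ∀ m, c / 2 * (ω m * v m ^ 2)
      + 1 / 2 * ((∑ i, ω m * ω i * s i m + ∑ i, ω i * ω m * s m i) / 2 * v m ^ 2)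
      ≤ ω m * t m * v m ^ 2 := by
    intro m
    have hrow : ∑ i, ω m * ω i * s i m = ω m * ∑ i, ω i * s i m := by
      rw [mul_sum]; exact sum_congr rfl fun i _ => by ring
    have hcol : ∑ i, ω i * ω m * s m i = ω m * ∑ i, ω i * s m i := by
      rw [mul_sum]; exact sum_congr rfl fun i _ => by ring
    rw [hrow, hcol]
    nlinarith [h1 m, h2 m, mul_nonneg (hω m) (sq_nonneg (v m))]
  have hsum := sum_le_sum fun m (_ : m ∈ Finset.univ) => hdiag m
  rw [sum_add_distrib, ← mul_sum, ← mul_sum] at hsum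
  linarith

theorem integral_deriv_mul_self {f f' : ℝ → ℝ} {a b : ℝ}
    (hf : ∀ x ∈ uIcc a b, HasDerivWithinAt f (f' x) (uIcc a b) x)
    (hf' : IntervalIntegrable f' volume a b) :
    ∫ x in a..b, f' x * f x = (f b ^ 2 - f a ^ 2) / 2 := by
  have h := intervalIntegral.integral_deriv_mul_eq_sub_of_hasDerivWithinAt hf hf hf' hf'
  simp_rw [mul_comm (f _) (f' _), ← two_mul, intervalIntegral.integral_const_mul] at h
  linarith

theorem mul_sq_sub_sq_eq_abs_mul_sq_sign {f : ℝ → ℝ} {μ : ℝ} (hl : 0 < μ → f (-1) = 0)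
    (hr : μ < 0 → f 1 = 0) : μ * (f 1 ^ 2 - f (-1) ^ 2) = |μ| * f (Real.sign μ) ^ 2 := by
  rcases lt_trichotomy μ 0 with h | rfl | h
  · rw [Real.sign_of_neg h, abs_of_neg h, hr h]; ring
  · simp
  · rw [Real.sign_of_pos h, abs_of_pos h, hl h]; ring

theorem sum_mul_eval_sq_eq_integral {ι : Type*} [Fintype ι] {μ ω : ι → ℝ} {a b : ℝ} {M : ℕ}
    (hquad : ∀ p : ℝ[X], p.degree ≤ (2 * M + 1 : ℕ) →
      ∑ m, ω m * p.eval (μ m) = ∫ x in a..b, p.eval x)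
    {q : ℝ[X]} (hq : q.natDegree ≤ M) :
    ∑ m, ω m * q.eval (μ m) ^ 2 = ∫ x in a..b, q.eval x ^ 2 := by
  have hdeg : (q ^ 2).degree ≤ (2 * M + 1 : ℕ) :=
    degree_le_of_natDegree_le (natDegree_pow_le.trans (by omega))
  simpa only [eval_pow] using hquad (q ^ 2) hdeg

theorem discrete_ordinates_coercive {ι : Type*} [Fintype ι] (μ ω : ι → ℝ) (hω : ∀ m, 0 ≤ ω m)
    (c : ℝ) (σt : ι → ℝ → ℝ) (σs : ι → ι → ℝ → ℝ)
    (hσt : ∀ m, ContinuousOn (σt m) (Icc (-1) 1))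
    (hσs : ∀ i m, ContinuousOn (σs i m) (Icc (-1) 1))
    (hσs0 : ∀ x ∈ Icc (-1 : ℝ) 1, ∀ i m, 0 ≤ σs i m x)
    (hsub1 : ∀ x ∈ Icc (-1 : ℝ) 1, ∀ m, σt m x - 1 / 2 * ∑ i, ω i * σs i m x ≥ c / 2)
    (hsub2 : ∀ x ∈ Icc (-1 : ℝ) 1, ∀ i, σt i x - 1 / 2 * ∑ m, ω m * σs i m x ≥ c / 2)
    (u u' : ι → ℝ → ℝ)
    (hu : ∀ m, ∀ x ∈ Icc (-1 : ℝ) 1, HasDerivWithinAt (u m) (u' m x) (Icc (-1) 1) x)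
    (hu' : ∀ m, ContinuousOn (u' m) (Icc (-1) 1))
    (hbcl : ∀ m, 0 < μ m → u m (-1) = 0) (hbcr : ∀ m, μ m < 0 → u m 1 = 0) :
    c / 2 * (∫ x in (-1 : ℝ)..1, ∑ m, ω m * u m x ^ 2)
        + 1 / 2 * ∑ m, ω m * |μ m| * u m (Real.sign (μ m)) ^ 2
      ≤ ∑ m, ω m * ∫ x in (-1 : ℝ)..1, (μ m * u' m x * u m x + σt m x * u m x ^ 2
          - 1 / 2 * ∑ i, ω i * σs i m x * u i x * u m x) := by
  have hI : uIcc (-1 : ℝ) 1 = Icc (-1) 1 := uIcc_of_le (by norm_num)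
  have hu_cont : ∀ m, ContinuousOn (u m) (Icc (-1) 1) :=
    fun m x hx => (hu m x hx).continuousWithinAt
  set C : ι → ℝ → ℝ := fun m x =>
    σt m x * u m x ^ 2 - 1 / 2 * ∑ i, ω i * σs i m x * u i x * u m x
  have hC_cont : ∀ m, ContinuousOn (C m) (Icc (-1) 1) := fun m =>
    ((hσt m).mul ((hu_cont m).pow 2)).sub (continuousOn_const.mul (continuousOn_finsetSum _
      fun i _ => ((continuousOn_const.mul (hσs i m)).mul (hu_cont i)).mul (hu_cont m)))
  have htransport : ∀ m, ∫ x in (-1 : ℝ)..1, μ m * u' m x * u m x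
      = μ m * ((u m 1 ^ 2 - u m (-1) ^ 2) / 2) := fun m => by
    simp_rw [mul_assoc, intervalIntegral.integral_const_mul]
    rw [integral_deriv_mul_self (hI ▸ hu m) (hI ▸ hu' m).intervalIntegrable]
  have hsplit : ∀ m, ∫ x in (-1 : ℝ)..1, (μ m * u' m x * u m x + σt m x * u m x ^ 2
        - 1 / 2 * ∑ i, ω i * σs i m x * u i x * u m x)
      = μ m * ((u m 1 ^ 2 - u m (-1) ^ 2) / 2) + ∫ x in (-1 : ℝ)..1, C m x := fun m => by
    simp_rw [add_sub_assoc]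
    rw [intervalIntegral.integral_add _ (hI ▸ hC_cont m).intervalIntegrable, htransport]
    exact (hI ▸ (continuousOn_const.mul (hu' m)).mul (hu_cont m)).intervalIntegrable
  have hcollision : c / 2 * (∫ x in (-1 : ℝ)..1, ∑ m, ω m * u m x ^ 2)
      ≤ ∑ m, ω m * ∫ x in (-1 : ℝ)..1, C m x := by
    simp_rw [← intervalIntegral.integral_const_mul]
    rw [← intervalIntegral.integral_finsetSum fun m _ =>
      (hI ▸ continuousOn_const.mul (hC_cont m)).intervalIntegrable]
    refine intervalIntegral.integral_mono_on (by norm_num) ?_ ?_ fun x hx =>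
      discrete_collision_coercive ω hω (fun i m => σs i m x) (hσs0 x hx) (fun m => σt m x) c
        (hsub1 x hx) (hsub2 x hx) (fun m => u m x)
    · exact (hI ▸ continuousOn_const.mul (continuousOn_finsetSum _ fun m _ =>
        continuousOn_const.mul ((hu_cont m).pow 2))).intervalIntegrable
    · exact (hI ▸ continuousOn_finsetSum _ fun m _ =>
        continuousOn_const.mul (hC_cont m)).intervalIntegrable
  have hboundary : ∑ m, ω m * (μ m * ((u m 1 ^ 2 - u m (-1) ^ 2) / 2))
      = 1 / 2 * ∑ m, ω m * |μ m| * u m (Real.sign (μ m)) ^ 2 := by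
    rw [Finset.mul_sum]
    refine Finset.sum_congr rfl fun m _ => ?_
    rw [mul_assoc (ω m), ← mul_sq_sub_sq_eq_abs_mul_sq_sign (hbcl m) (hbcr m)]
    ring
  simp_rw [hsplit, mul_add, Finset.sum_add_distrib, hboundary]
  linarith

theorem semidiscrete_coercivity_general (M : ℕ) (μ ω : Fin (M + 1) → ℝ)
    (hμ : ∀ m, μ m ∈ Ioo (-1 : ℝ) 1) (hω : ∀ m, 0 < ω m)
    (hquad : ∀ p : Polynomial ℝ, p.degree ≤ (2 * M + 1 : ℕ) →
      ∑ m, ω m * p.eval (μ m) = ∫ x in (-1 : ℝ)..1, p.eval x)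
    (c : ℝ)
    (St : ℝ → ℝ → ℝ)
    (hSt : ContinuousOn (fun q : ℝ × ℝ => St q.1 q.2)
      (Icc (-1 : ℝ) 1 ×ˢ Icc (-1 : ℝ) 1))
    (Ss : ℝ → ℝ → ℝ → ℝ)
    (hSs : ContinuousOn (fun q : ℝ × ℝ × ℝ => Ss q.1 q.2.1 q.2.2)
      (Icc (-1 : ℝ) 1 ×ˢ Icc (-1 : ℝ) 1 ×ˢ Icc (-1 : ℝ) 1))
    (hSs0 : ∀ x ∈ Icc (-1 : ℝ) 1, ∀ ν ∈ Icc (-1 : ℝ) 1, ∀ μ' ∈ Icc (-1 : ℝ) 1,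
      0 ≤ Ss x ν μ')
    (hsub1 : ∀ x ∈ Icc (-1 : ℝ) 1, ∀ m,
      St x (μ m) - (1 / 2) * ∑ i, ω i * Ss x (μ i) (μ m) ≥ c / 2)
    (hsub2 : ∀ x ∈ Icc (-1 : ℝ) 1, ∀ i,
      St x (μ i) - (1 / 2) * ∑ m, ω m * Ss x (μ i) (μ m) ≥ c / 2)
    (cf cf' : Fin (M + 1) → ℝ → ℝ)
    (hderiv : ∀ j, ∀ x ∈ Icc (-1 : ℝ) 1,
      HasDerivWithinAt (cf j) (cf' j x) (Icc (-1 : ℝ) 1) x)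
    (hcont : ∀ j, ContinuousOn (cf' j) (Icc (-1 : ℝ) 1))
    (hbcl : ∀ m, 0 < μ m → ∑ j, cf j (-1) * μ m ^ (j : ℕ) = 0)
    (hbcr : ∀ m, μ m < 0 → ∑ j, cf j 1 * μ m ^ (j : ℕ) = 0) :
    ∑ m, ω m * ∫ x in (-1 : ℝ)..1,
        (μ m * (∑ j, cf' j x * μ m ^ (j : ℕ)) * (∑ j, cf j x * μ m ^ (j : ℕ))
          + St x (μ m) * (∑ j, cf j x * μ m ^ (j : ℕ)) ^ 2
          - (1 / 2) * ∑ i, ω i * Ss x (μ i) (μ m) * (∑ j, cf j x * μ i ^ (j : ℕ))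
              * (∑ j, cf j x * μ m ^ (j : ℕ)))
      ≥ (c / 2) * (∫ x in (-1 : ℝ)..1, ∫ ν in (-1 : ℝ)..1,
            (∑ j, cf j x * ν ^ (j : ℕ)) ^ 2)
        + (1 / 2) * ∑ m, ω m * |μ m|
            * (∑ j, cf j (Real.sign (μ m)) * μ m ^ (j : ℕ)) ^ 2 := by
  have hμI : ∀ m, μ m ∈ Icc (-1 : ℝ) 1 := fun m => Ioo_subset_Icc_self (hμ m)
  have hexact : ∀ x, ∑ m, ω m * (∑ j, cf j x * μ m ^ (j : ℕ)) ^ 2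
      = ∫ ν in (-1 : ℝ)..1, (∑ j, cf j x * ν ^ (j : ℕ)) ^ 2 := fun x => by
    simpa only [eval_finsetSum, eval_mul, eval_C, eval_pow, eval_X] using
      sum_mul_eval_sq_eq_integral hquad (q := ∑ j : Fin (M + 1), C (cf j x) * X ^ (j : ℕ))
        (natDegree_sum_le_of_forall_le _ _ fun j _ =>
          (natDegree_C_mul_X_pow_le _ _).trans j.is_le)
  simp_rw [← hexact]
  refine discrete_ordinates_coercive μ ω (fun m => (hω m).le) c (fun m x => St x (μ m))
    (fun i m x => Ss x (μ i) (μ m)) (fun m => ?_) (fun i m => ?_)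
    (fun x hx i m => hSs0 x hx _ (hμI i) _ (hμI m)) hsub1 hsub2
    (fun m x => ∑ j, cf j x * μ m ^ (j : ℕ)) (fun m x => ∑ j, cf' j x * μ m ^ (j : ℕ))
    (fun m x hx => HasDerivWithinAt.fun_sum fun j _ => (hderiv j x hx).mul_const _)
    (fun m => continuousOn_finsetSum _ fun j _ => (hcont j).mul continuousOn_const) hbcl hbcr
  · exact hSt.comp (continuousOn_id.prodMk continuousOn_const) fun x hx => ⟨hx, hμI m⟩
  · exact hSs.comp (continuousOn_id.prodMk (continuousOn_const.prodMk continuousOn_const))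
      fun x hx => ⟨hx, hμI i, hμI m⟩

/-- Coercivity of the semi-discrete transport bilinear form: under the discrete
subcriticality assumptions on continuous cross sections `St` (total) and
`Ss ≥ 0` (scattering), for a Legendre–Gauss-type quadrature (nodes in `(-1,1)`,
positive weights, exact for polynomials of degree ≤ 2M+1) and a function
`ψ(x,μ) = Σ_{j=0}^M c_j(x) μ^j` with continuously differentiable coefficients,
vanishing at the inflow boundary for each discrete direction,
`⟨𝓛_M ψ, ψ⟩_M ≥ (c/2) |||ψ|||² + (1/2) Σ_m ω_m |μ_m| ψ(sign μ_m, μ_m)²`. -/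
theorem semidiscrete_coercivity (M : ℕ) (μ ω : Fin (M + 1) → ℝ)
    (hμ : ∀ m, μ m ∈ Ioo (-1 : ℝ) 1) (hω : ∀ m, 0 < ω m)
    (hquad : ∀ p : Polynomial ℝ, p.degree ≤ (2 * M + 1 : ℕ) →
      ∑ m, ω m * p.eval (μ m) = ∫ x in (-1 : ℝ)..1, p.eval x)
    (c : ℝ) (hc : 0 < c)
    (St : ℝ → ℝ → ℝ)
    (hSt : ContinuousOn (fun q : ℝ × ℝ => St q.1 q.2)
      (Icc (-1 : ℝ) 1 ×ˢ Icc (-1 : ℝ) 1))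
    (Ss : ℝ → ℝ → ℝ → ℝ)
    (hSs : ContinuousOn (fun q : ℝ × ℝ × ℝ => Ss q.1 q.2.1 q.2.2)
      (Icc (-1 : ℝ) 1 ×ˢ Icc (-1 : ℝ) 1 ×ˢ Icc (-1 : ℝ) 1))
    (hSs0 : ∀ x ∈ Icc (-1 : ℝ) 1, ∀ ν ∈ Icc (-1 : ℝ) 1, ∀ μ' ∈ Icc (-1 : ℝ) 1,
      0 ≤ Ss x ν μ')
    (hsub1 : ∀ x ∈ Icc (-1 : ℝ) 1, ∀ m,
      St x (μ m) - (1 / 2) * ∑ i, ω i * Ss x (μ i) (μ m) ≥ c / 2)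
    (hsub2 : ∀ x ∈ Icc (-1 : ℝ) 1, ∀ i,
      St x (μ i) - (1 / 2) * ∑ m, ω m * Ss x (μ i) (μ m) ≥ c / 2)
    (cf cf' : Fin (M + 1) → ℝ → ℝ)
    (hderiv : ∀ j, ∀ x ∈ Icc (-1 : ℝ) 1,
      HasDerivWithinAt (cf j) (cf' j x) (Icc (-1 : ℝ) 1) x)
    (hcont : ∀ j, ContinuousOn (cf' j) (Icc (-1 : ℝ) 1))
    (hbcl : ∀ m, 0 < μ m → ∑ j, cf j (-1) * μ m ^ (j : ℕ) = 0)
    (hbcr : ∀ m, μ m < 0 → ∑ j, cf j 1 * μ m ^ (j : ℕ) = 0) :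
    ∑ m, ω m * ∫ x in (-1 : ℝ)..1,
        (μ m * (∑ j, cf' j x * μ m ^ (j : ℕ)) * (∑ j, cf j x * μ m ^ (j : ℕ))
          + St x (μ m) * (∑ j, cf j x * μ m ^ (j : ℕ)) ^ 2
          - (1 / 2) * ∑ i, ω i * Ss x (μ i) (μ m) * (∑ j, cf j x * μ i ^ (j : ℕ))
              * (∑ j, cf j x * μ m ^ (j : ℕ)))
      ≥ (c / 2) * (∫ x in (-1 : ℝ)..1, ∫ ν in (-1 : ℝ)..1,
            (∑ j, cf j x * ν ^ (j : ℕ)) ^ 2)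
        + (1 / 2) * ∑ m, ω m * |μ m|
            * (∑ j, cf j (Real.sign (μ m)) * μ m ^ (j : ℕ)) ^ 2 :=
  semidiscrete_coercivity_general M μ ω hμ hω hquad c St hSt Ss hSs hSs0 hsub1 hsub2 cf cf' hderiv
    hcont hbcl hbcr
end

section
/- Let M, N be natural numbers, let μ_0, …, μ_M ∈ (-1,1) be distinct and ω_0, …, ω_M > 0 satisfy Σ_{m=0}^{M} ω_m p(μ_m) = ∫_{-1}^{1} p(μ) dμ for every polynomial p of degree at most 2M+1. Let c > 0, let Σ_t : [-1,1] × [-1,1] → ℝ be continuous and Σ_s : [-1,1] × [-1,1] × [-1,1] → ℝ be continuous and nonnegative, and assume for all x ∈ [-1,1] and all 0 ≤ m, i ≤ M that Σ_t(x,μ_m) - (1/2) Σ_{i=0}^{M} ω_i Σ_s(x,μ_i,μ_m) ≥ c/2 and Σ_t(x,μ_i) - (1/2) Σ_{m=0}^{M} ω_m Σ_s(x,μ_i,μ_m) ≥ c/2. Let ψ(x,μ) = Σ_{j=0}^{M} c_j(x) μ^j, where each c_j is a real polynomial of degree at most N, and suppose ψ(-1,μ_m) = 0 whenever μ_m > 0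 and ψ(1,μ_m) = 0 whenever μ_m < 0. If for every m with 0 ≤ m ≤ M and every polynomial v of degree at most N satisfying v(-1) = 0 when μ_m > 0 and v(1) = 0 when μ_m < 0 we have ∫_{-1}^{1} [ μ_m (∂_x ψ)(x,μ_m) + Σ_t(x,μ_m) ψ(x,μ_m) - (1/2) Σ_{i=0}^{M} ω_i Σ_s(x,μ_i,μ_m) ψ(x,μ_i) ] v(x) dx = 0, then ψ is identically zero on [-1,1] × [-1,1]. -/
open MeasureTheory Polynomial Set

/-!
Energy argument. The collocation polynomial `ψ_m = ψ(·, μ_m)` is itself an admissible test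
function for the `m`-th equation. Its streaming term integrates to
`μ_m (ψ_m(1)² - ψ_m(-1)²) / 2 ≥ 0` by the inflow condition, so the reaction term
`∫ (Σ_t ψ_m - ½ Σ_i ω_i Σ_s ψ_i) ψ_m` is `≤ 0`. Summing with the weights `ω_m` and splitting the
scattering cross terms by `2 ψ_i ψ_m ≤ ψ_i² + ψ_m²`, the two subcriticality conditions bound the
weighted reaction integrand pointwise from below by `c/2 Σ_m ω_m ψ_m²`, which therefore vanishes
on `[-1, 1]`. For fixed `x`, `μ ↦ ψ(x, μ)` has degree `≤ M` and vanishes at the `M + 1` distinct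
nodes, so all `c_j(x)` vanish.
-/

theorem two_mul_sum_sum_mul_mul_le {ι : Type*} [Fintype ι] {K : ι → ι → ℝ}
    (hK : ∀ i j, 0 ≤ K i j) (s : ι → ℝ) :
    2 * ∑ i, ∑ j, K i j * s i * s j
      ≤ ∑ i, (∑ j, K i j) * s i ^ 2 + ∑ j, (∑ i, K i j) * s j ^ 2 :=
  calc 2 * ∑ i, ∑ j, K i j * s i * s j
      ≤ ∑ i, ∑ j, (K i j * s i ^ 2 + K i j * s j ^ 2) := by
        simp only [Finset.mul_sum]
        gcongr with i _ j _
        nlinarith [mul_le_mul_of_nonneg_left (two_mul_le_add_sq (s i) (s j)) (hK i j)]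
    _ = _ := by
        simp only [Finset.sum_add_distrib, Finset.sum_mul]
        rw [Finset.sum_comm (f := fun i j => K i j * s j ^ 2)]

theorem sum_mul_sq_le_of_subcritical {ι : Type*} [Fintype ι] {ω a s : ι → ℝ}
    {S : ι → ι → ℝ} {c : ℝ} (hω : ∀ m, 0 ≤ ω m) (hS : ∀ i m, 0 ≤ S i m)
    (h₁ : ∀ m, c / 2 ≤ a m - 1 / 2 * ∑ i, ω i * S i m)
    (h₂ : ∀ i, c / 2 ≤ a i - 1 / 2 * ∑ m, ω m * S i m) :
    c / 2 * ∑ m, ω m * s m ^ 2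
      ≤ ∑ m, ω m * ((a m * s m - 1 / 2 * ∑ i, ω i * S i m * s i) * s m) := by
  have hschur := two_mul_sum_sum_mul_mul_le (K := fun i m => ω i * ω m * S i m)
    (fun i m => mul_nonneg (mul_nonneg (hω i) (hω m)) (hS i m)) s
  have hrow : ∑ i, (∑ m, ω i * ω m * S i m) * s i ^ 2
      ≤ ∑ i, ω i * s i ^ 2 * (2 * a i - c) := by
    refine Finset.sum_le_sum fun i _ => ?_
    calc (∑ m, ω i * ω m * S i m) * s i ^ 2 = ω i * s i ^ 2 * ∑ m, ω m * S i m := by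
          rw [Finset.sum_mul, Finset.mul_sum]
          exact Finset.sum_congr rfl fun m _ => by ring
      _ ≤ ω i * s i ^ 2 * (2 * a i - c) :=
          mul_le_mul_of_nonneg_left (by linarith [h₂ i]) (mul_nonneg (hω i) (sq_nonneg _))
  have hcol : ∑ m, (∑ i, ω i * ω m * S i m) * s m ^ 2
      ≤ ∑ m, ω m * s m ^ 2 * (2 * a m - c) := by
    refine Finset.sum_le_sum fun m _ => ?_
    calc (∑ i, ω i * ω m * S i m) * s m ^ 2 = ω m * s m ^ 2 * ∑ i, ω i * S i m := by
          rw [Finset.sum_mul, Finset.mul_sum]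
          exact Finset.sum_congr rfl fun i _ => by ring
      _ ≤ ω m * s m ^ 2 * (2 * a m - c) :=
          mul_le_mul_of_nonneg_left (by linarith [h₁ m]) (mul_nonneg (hω m) (sq_nonneg _))
  have hform : ∑ m, ω m * ((a m * s m - 1 / 2 * ∑ i, ω i * S i m * s i) * s m)
      = ∑ m, ω m * s m ^ 2 * a m - 1 / 2 * ∑ m, ∑ i, ω i * ω m * S i m * s i * s m := by
    rw [Finset.mul_sum, ← Finset.sum_sub_distrib]
    refine Finset.sum_congr rfl fun m _ => ?_
    rw [show ∑ i, ω i * ω m * S i m * s i * s m = ω m * s m * ∑ i, ω i * S i m * s i by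
      rw [Finset.mul_sum]; exact Finset.sum_congr rfl fun i _ => by ring]
    ring
  have hsplit : ∑ m, ω m * s m ^ 2 * (2 * a m - c)
      = 2 * ∑ m, ω m * s m ^ 2 * a m - c * ∑ m, ω m * s m ^ 2 := by
    rw [Finset.mul_sum, Finset.mul_sum, ← Finset.sum_sub_distrib]
    exact Finset.sum_congr rfl fun m _ => by ring
  rw [Finset.sum_comm] at hschur
  linarith

theorem integral_derivative_eval_mul_eval (p : ℝ[X]) (a b : ℝ) :
    ∫ x in a..b, (derivative p).eval x * p.eval x = (p.eval b ^ 2 - p.eval a ^ 2) / 2 := by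
  have hderiv : ∀ x ∈ uIcc a b,
      HasDerivAt (fun x => p.eval x ^ 2 / 2) ((derivative p).eval x * p.eval x) x :=
    fun x _ => (((p.hasDerivAt x).pow 2).div_const 2).congr_deriv (by ring)
  rw [intervalIntegral.integral_eq_sub_of_hasDerivAt hderiv
    ((by fun_prop : Continuous _).intervalIntegrable _ _)]
  ring

theorem integral_mul_eval_nonpos_of_transport {p : ℝ[X]} {μ a b : ℝ} {r : ℝ → ℝ}
    (ha : 0 < μ → p.eval a = 0) (hb : μ < 0 → p.eval b = 0)
    (hr : IntervalIntegrable (fun x => r x * p.eval x) volume a b)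
    (h : ∫ x in a..b, (μ * (derivative p).eval x + r x) * p.eval x = 0) :
    ∫ x in a..b, r x * p.eval x ≤ 0 := by
  have hstream : 0 ≤ μ * ∫ x in a..b, (derivative p).eval x * p.eval x := by
    rw [integral_derivative_eval_mul_eval]
    rcases lt_trichotomy μ 0 with hμ | rfl | hμ
    · rw [hb hμ]; nlinarith [sq_nonneg (p.eval a)]
    · simp
    · rw [ha hμ]; nlinarith [sq_nonneg (p.eval b)]
  simp only [add_mul, mul_assoc] at h
  rw [intervalIntegral.integral_add ((by fun_prop : Continuous _).intervalIntegrable _ _) hr,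
    intervalIntegral.integral_const_mul] at h
  linarith

theorem ContinuousOn.eqOn_zero_of_integral_nonpos {f : ℝ → ℝ} {a b : ℝ} (hab : a < b)
    (hf : ContinuousOn f (Icc a b)) (hf₀ : ∀ x ∈ Icc a b, 0 ≤ f x)
    (hint : ∫ x in a..b, f x ≤ 0) : EqOn f 0 (Icc a b) := by
  intro x hx
  by_contra hne
  have := intervalIntegral.integral_pos hab hf (fun y hy => hf₀ y (Ioc_subset_Icc_self hy))
    ⟨x, hx, (hf₀ x hx).lt_of_ne (Ne.symm hne)⟩
  linarith

theorem eqOn_zero_of_sum_integral_nonpos {ι : Type*} [Fintype ι] {a b c : ℝ} (hab : a < b)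
    (hc : 0 < c) {ω : ι → ℝ} (hω : ∀ m, 0 < ω m) {u R : ι → ℝ → ℝ}
    (hu : ∀ m, ContinuousOn (u m) (Icc a b)) (hRi : ∀ m, IntervalIntegrable (R m) volume a b)
    (hR : ∀ m, ∫ x in a..b, R m x ≤ 0)
    (hcoer : ∀ x ∈ Icc a b, c * ∑ m, ω m * u m x ^ 2 ≤ ∑ m, ω m * R m x) (m : ι) :
    EqOn (u m) 0 (Icc a b) := by
  set E : ℝ → ℝ := fun x => c * ∑ m, ω m * u m x ^ 2
  have hEc : ContinuousOn E (Icc a b) :=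
    continuousOn_const.mul (continuousOn_finsetSum _ fun m _ =>
      continuousOn_const.mul ((hu m).pow 2))
  have hterm₀ : ∀ x m, 0 ≤ ω m * u m x ^ 2 := fun x m => mul_nonneg (hω m).le (sq_nonneg _)
  have hE₀ : ∀ x ∈ Icc a b, 0 ≤ E x := fun x _ =>
    mul_nonneg hc.le (Finset.sum_nonneg fun m _ => hterm₀ x m)
  have hEint : ∫ x in a..b, E x ≤ 0 :=
    calc ∫ x in a..b, E x ≤ ∫ x in a..b, ∑ m, ω m * R m x :=
          intervalIntegral.integral_mono_on hab.le (hEc.intervalIntegrable_of_Icc hab.le)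
            (by simpa only [Finset.sum_fn] using
              IntervalIntegrable.sum Finset.univ fun m _ => (hRi m).const_mul (ω m)) hcoer
      _ = ∑ m, ω m * ∫ x in a..b, R m x := by
          rw [intervalIntegral.integral_finsetSum fun m _ => (hRi m).const_mul _]
          simp only [intervalIntegral.integral_const_mul]
      _ ≤ 0 := Finset.sum_nonpos fun m _ => mul_nonpos_of_nonneg_of_nonpos (hω m).le (hR m)
  intro x hx
  have hsum : ∑ m, ω m * u m x ^ 2 = 0 :=
    (mul_eq_zero.mp (hEc.eqOn_zero_of_integral_nonpos hab hE₀ hEint hx)).resolve_left hc.ne'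
  have := (Finset.sum_eq_zero_iff_of_nonneg fun m _ => hterm₀ x m).mp hsum m (Finset.mem_univ m)
  simpa [(hω m).ne'] using this

/-- `angularPolynomial cf ν` is the polynomial `x ↦ ψ(x, ν) = Σ_j c_j(x) ν^j`. -/
noncomputable def angularPolynomial {n : ℕ} (cf : Fin n → ℝ[X]) (ν : ℝ) : ℝ[X] :=
  ∑ j : Fin n, ν ^ (j : ℕ) • cf j

theorem eval_angularPolynomial {n : ℕ} (cf : Fin n → ℝ[X]) (ν x : ℝ) :
    (angularPolynomial cf ν).eval x = ∑ j, (cf j).eval x * ν ^ (j : ℕ) := by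
  simp [angularPolynomial, eval_finsetSum, mul_comm]

theorem derivative_angularPolynomial {n : ℕ} (cf : Fin n → ℝ[X]) (ν : ℝ) :
    derivative (angularPolynomial cf ν) = angularPolynomial (fun j => derivative (cf j)) ν := by
  simp [angularPolynomial]

theorem degree_angularPolynomial_le {n : ℕ} {cf : Fin n → ℝ[X]} {N : ℕ}
    (hdeg : ∀ j, (cf j).degree ≤ N) (ν : ℝ) : (angularPolynomial cf ν).degree ≤ N :=
  (degree_sum_le _ _).trans (Finset.sup_le fun j _ => (degree_smul_le _ _).trans (hdeg j))

theorem fully_discrete_uniqueness_general (M N : ℕ) (μ ω : Fin (M + 1) → ℝ)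
    (hμ : ∀ m, μ m ∈ Ioo (-1 : ℝ) 1) (hμinj : Function.Injective μ)
    (hω : ∀ m, 0 < ω m)
    (c : ℝ) (hc : 0 < c)
    (St : ℝ → ℝ → ℝ)
    (hSt : ContinuousOn (fun q : ℝ × ℝ => St q.1 q.2)
      (Icc (-1 : ℝ) 1 ×ˢ Icc (-1 : ℝ) 1))
    (Ss : ℝ → ℝ → ℝ → ℝ)
    (hSs : ContinuousOn (fun q : ℝ × ℝ × ℝ => Ss q.1 q.2.1 q.2.2)
      (Icc (-1 : ℝ) 1 ×ˢ Icc (-1 : ℝ) 1 ×ˢ Icc (-1 : ℝ) 1))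
    (hSs0 : ∀ x ∈ Icc (-1 : ℝ) 1, ∀ ν ∈ Icc (-1 : ℝ) 1, ∀ μ' ∈ Icc (-1 : ℝ) 1,
      0 ≤ Ss x ν μ')
    (hsub1 : ∀ x ∈ Icc (-1 : ℝ) 1, ∀ m,
      St x (μ m) - (1 / 2) * ∑ i, ω i * Ss x (μ i) (μ m) ≥ c / 2)
    (hsub2 : ∀ x ∈ Icc (-1 : ℝ) 1, ∀ i,
      St x (μ i) - (1 / 2) * ∑ m, ω m * Ss x (μ i) (μ m) ≥ c / 2)
    (cf : Fin (M + 1) → Polynomial ℝ) (hdeg : ∀ j, (cf j).degree ≤ N)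
    (hbcl : ∀ m, 0 < μ m → ∑ j, (cf j).eval (-1) * μ m ^ (j : ℕ) = 0)
    (hbcr : ∀ m, μ m < 0 → ∑ j, (cf j).eval 1 * μ m ^ (j : ℕ) = 0)
    (hgal : ∀ m, ∀ v : Polynomial ℝ, v.degree ≤ N →
      (0 < μ m → v.eval (-1) = 0) → (μ m < 0 → v.eval 1 = 0) →
      ∫ x in (-1 : ℝ)..1,
          (μ m * (∑ j, (derivative (cf j)).eval x * μ m ^ (j : ℕ))
            + St x (μ m) * (∑ j, (cf j).eval x * μ m ^ (j : ℕ))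
            - (1 / 2) * ∑ i, ω i * Ss x (μ i) (μ m)
                * (∑ j, (cf j).eval x * μ i ^ (j : ℕ))) * v.eval x = 0) :
    ∀ x ∈ Icc (-1 : ℝ) 1, ∀ ν ∈ Icc (-1 : ℝ) 1,
      ∑ j, (cf j).eval x * ν ^ (j : ℕ) = 0 := by
  set ψ : Fin (M + 1) → ℝ[X] := fun m => angularPolynomial cf (μ m)
  have hμI : ∀ m, μ m ∈ Icc (-1 : ℝ) 1 := fun m => Ioo_subset_Icc_self (hμ m)
  set r : Fin (M + 1) → ℝ → ℝ := fun m x =>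
    St x (μ m) * (ψ m).eval x - 1 / 2 * ∑ i, ω i * Ss x (μ i) (μ m) * (ψ i).eval x
  have hr : ∀ m, ContinuousOn (fun x => r m x * (ψ m).eval x) (Icc (-1) 1) := by
    intro m
    have hSt' : ContinuousOn (fun x => St x (μ m)) (Icc (-1) 1) :=
      hSt.comp (continuous_id.prodMk continuous_const).continuousOn fun x hx => ⟨hx, hμI m⟩
    have hSs' : ∀ i, ContinuousOn (fun x => Ss x (μ i) (μ m)) (Icc (-1) 1) := fun i =>
      hSs.comp (continuous_id.prodMk (continuous_const (y := (μ i, μ m)))).continuousOn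
        fun x hx => ⟨hx, hμI i, hμI m⟩
    fun_prop
  have hψl : ∀ m, 0 < μ m → (ψ m).eval (-1) = 0 := by
    simpa [ψ, eval_angularPolynomial] using hbcl
  have hψr : ∀ m, μ m < 0 → (ψ m).eval 1 = 0 := by
    simpa [ψ, eval_angularPolynomial] using hbcr
  have hR : ∀ m, ∫ x in (-1 : ℝ)..1, r m x * (ψ m).eval x ≤ 0 := fun m =>
    integral_mul_eval_nonpos_of_transport (hψl m) (hψr m)
      ((hr m).intervalIntegrable_of_Icc (by norm_num)) <| by
        simpa [ψ, r, derivative_angularPolynomial, eval_angularPolynomial, add_sub_assoc] using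
          hgal m (ψ m) (degree_angularPolynomial_le hdeg _) (hψl m) (hψr m)
  have hψ₀ : ∀ m, EqOn (fun x => (ψ m).eval x) 0 (Icc (-1) 1) :=
    eqOn_zero_of_sum_integral_nonpos (by norm_num) (half_pos hc) hω
      (fun m => (ψ m).continuous.continuousOn)
      (fun m => (hr m).intervalIntegrable_of_Icc (by norm_num)) hR fun x hx =>
        sum_mul_sq_le_of_subcritical (fun m => (hω m).le)
          (fun i m => hSs0 x hx _ (hμI i) _ (hμI m)) (hsub1 x hx) (hsub2 x hx)
  intro x hx ν _
  have hcf : (fun j => (cf j).eval x) = 0 :=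
    Matrix.eq_zero_of_forall_index_sum_mul_pow_eq_zero hμinj fun m => by
      simpa [ψ, eval_angularPolynomial] using hψ₀ m hx
  simp [congrFun hcf]

/-- Uniqueness for the fully spectral (Petrov–)Galerkin–collocation scheme with
vacuum boundary conditions: if `ψ(x,μ) = Σ_{j=0}^M c_j(x) μ^j` with polynomial
coefficients of degree ≤ N vanishes at the inflow boundary for each discrete
direction and satisfies the homogeneous discrete transport equations against
all admissible test polynomials, then `ψ ≡ 0` on `[-1,1] × [-1,1]`. -/
theorem fully_discrete_uniqueness (M N : ℕ) (μ ω : Fin (M + 1) → ℝ)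
    (hμ : ∀ m, μ m ∈ Ioo (-1 : ℝ) 1) (hμinj : Function.Injective μ)
    (hω : ∀ m, 0 < ω m)
    (hquad : ∀ p : Polynomial ℝ, p.degree ≤ (2 * M + 1 : ℕ) →
      ∑ m, ω m * p.eval (μ m) = ∫ x in (-1 : ℝ)..1, p.eval x)
    (c : ℝ) (hc : 0 < c)
    (St : ℝ → ℝ → ℝ)
    (hSt : ContinuousOn (fun q : ℝ × ℝ => St q.1 q.2)
      (Icc (-1 : ℝ) 1 ×ˢ Icc (-1 : ℝ) 1))
    (Ss : ℝ → ℝ → ℝ → ℝ)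
    (hSs : ContinuousOn (fun q : ℝ × ℝ × ℝ => Ss q.1 q.2.1 q.2.2)
      (Icc (-1 : ℝ) 1 ×ˢ Icc (-1 : ℝ) 1 ×ˢ Icc (-1 : ℝ) 1))
    (hSs0 : ∀ x ∈ Icc (-1 : ℝ) 1, ∀ ν ∈ Icc (-1 : ℝ) 1, ∀ μ' ∈ Icc (-1 : ℝ) 1,
      0 ≤ Ss x ν μ')
    (hsub1 : ∀ x ∈ Icc (-1 : ℝ) 1, ∀ m,
      St x (μ m) - (1 / 2) * ∑ i, ω i * Ss x (μ i) (μ m) ≥ c / 2)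
    (hsub2 : ∀ x ∈ Icc (-1 : ℝ) 1, ∀ i,
      St x (μ i) - (1 / 2) * ∑ m, ω m * Ss x (μ i) (μ m) ≥ c / 2)
    (cf : Fin (M + 1) → Polynomial ℝ) (hdeg : ∀ j, (cf j).degree ≤ N)
    (hbcl : ∀ m, 0 < μ m → ∑ j, (cf j).eval (-1) * μ m ^ (j : ℕ) = 0)
    (hbcr : ∀ m, μ m < 0 → ∑ j, (cf j).eval 1 * μ m ^ (j : ℕ) = 0)
    (hgal : ∀ m, ∀ v : Polynomial ℝ, v.degree ≤ N →
      (0 < μ m → v.eval (-1) = 0) → (μ m < 0 → v.eval 1 = 0) →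
      ∫ x in (-1 : ℝ)..1,
          (μ m * (∑ j, (derivative (cf j)).eval x * μ m ^ (j : ℕ))
            + St x (μ m) * (∑ j, (cf j).eval x * μ m ^ (j : ℕ))
            - (1 / 2) * ∑ i, ω i * Ss x (μ i) (μ m)
                * (∑ j, (cf j).eval x * μ i ^ (j : ℕ))) * v.eval x = 0) :
    ∀ x ∈ Icc (-1 : ℝ) 1, ∀ ν ∈ Icc (-1 : ℝ) 1,
      ∑ j, (cf j).eval x * ν ^ (j : ℕ) = 0 :=
  fully_discrete_uniqueness_general M N μ ω hμ hμinj hω c hc St hSt Ss hSs hSs0 hsub1 hsub2 cf hdeg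
    hbcl hbcr hgal
end

section
/- Let M be a natural number, let μ_0, …, μ_M ∈ [-1,1] be distinct points and ω_0, …, ω_M real weights such that Σ_{m=0}^{M} ω_m p(μ_m) = ∫_{-1}^{1} p(μ) dμ for every polynomial p of degree at most 2M+1. Let u : [-1,1] → ℝ be continuous and let I_M u be the unique polynomial of degree at most M with (I_M u)(μ_m) = u(μ_m) for all m. Then for every polynomial φ of degree at most M, | ∫_{-1}^{1} u(μ) φ(μ) dμ - Σ_{m=0}^{M} ω_m u(μ_m) φ(μ_m) | ≤ ( ∫_{-1}^{1} (u(μ) - (I_M u)(μ))^2 dμ )^{1/2} · ( ∫_{-1}^{1} φ(μ)^2 dμ )^{1/2}. -/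
/-! Since `Iu * φ` has degree at most `2M`, exactness of the quadrature and `Iu = u` at the nodes
turn the discrete inner product into `∫ Iu φ`. The error is then `∫ (u - Iu) φ`, and
Cauchy–Schwarz finishes. -/

open MeasureTheory Polynomial Set

theorem abs_integral_mul_le_sqrt_mul_sqrt {α : Type*} [MeasurableSpace α]
    {μ : Measure α} {f g : α → ℝ} (hf : MemLp f 2 μ) (hg : MemLp g 2 μ) :
    |∫ a, f a * g a ∂μ| ≤ √(∫ a, f a ^ 2 ∂μ) * √(∫ a, g a ^ 2 ∂μ) := by
  have hholder := integral_mul_norm_le_Lp_mul_Lq (μ := μ) Real.HolderConjugate.two_two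
    (by simpa using hf) (by simpa using hg)
  simp only [Real.norm_eq_abs, Real.rpow_two, sq_abs, ← Real.sqrt_eq_rpow] at hholder
  calc |∫ a, f a * g a ∂μ| ≤ ∫ a, |f a| * |g a| ∂μ := by
        simpa only [abs_mul] using abs_integral_le_integral_abs (f := fun a => f a * g a)
    _ ≤ _ := hholder

theorem ContinuousOn.memLp_two_restrict_Icc {f : ℝ → ℝ} {a b : ℝ} (hf : ContinuousOn f (Icc a b)) :
    MemLp f 2 (volume.restrict (Icc a b)) :=
  (memLp_two_iff_integrable_sq (hf.aestronglyMeasurable measurableSet_Icc)).2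
    ((hf.pow 2).integrableOn_Icc)

theorem abs_intervalIntegral_mul_le_sqrt_mul_sqrt {f g : ℝ → ℝ} {a b : ℝ} (hab : a ≤ b)
    (hf : ContinuousOn f (Icc a b)) (hg : ContinuousOn g (Icc a b)) :
    |∫ x in a..b, f x * g x| ≤ √(∫ x in a..b, f x ^ 2) * √(∫ x in a..b, g x ^ 2) := by
  simp only [intervalIntegral.integral_of_le hab, ← integral_Icc_eq_integral_Ioc]
  exact abs_integral_mul_le_sqrt_mul_sqrt hf.memLp_two_restrict_Icc
    hg.memLp_two_restrict_Icc

theorem sum_weight_mul_mul_eq_integral_interpolant_mul {ι : Type*} [Fintype ι] {μ ω : ι → ℝ}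
    {a b : ℝ} {N : WithBot ℕ}
    (hquad : ∀ p : ℝ[X], p.degree ≤ N → ∑ m, ω m * p.eval (μ m) = ∫ x in a..b, p.eval x)
    {u : ℝ → ℝ} {Iu : ℝ[X]} (hI : ∀ m, Iu.eval (μ m) = u (μ m))
    {φ : ℝ[X]} (hdeg : (Iu * φ).degree ≤ N) :
    ∑ m, ω m * u (μ m) * φ.eval (μ m) = ∫ x in a..b, Iu.eval x * φ.eval x := by
  simpa only [eval_mul, hI, mul_assoc] using hquad (Iu * φ) hdeg

theorem quadrature_error_bound_general (M : ℕ) (μ ω : Fin (M + 1) → ℝ)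
    (hquad : ∀ p : Polynomial ℝ, p.degree ≤ (2 * M + 1 : ℕ) →
      ∑ m, ω m * p.eval (μ m) = ∫ x in (-1 : ℝ)..1, p.eval x)
    (u : ℝ → ℝ) (hu : ContinuousOn u (Icc (-1 : ℝ) 1))
    (Iu : Polynomial ℝ) (hIdeg : Iu.degree ≤ M)
    (hI : ∀ m, Iu.eval (μ m) = u (μ m)) :
    ∀ φ : Polynomial ℝ, φ.degree ≤ M →
      |(∫ x in (-1 : ℝ)..1, u x * φ.eval x) - ∑ m, ω m * u (μ m) * φ.eval (μ m)|
        ≤ Real.sqrt (∫ x in (-1 : ℝ)..1, (u x - Iu.eval x) ^ 2)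
            * Real.sqrt (∫ x in (-1 : ℝ)..1, (φ.eval x) ^ 2) := by
  intro φ hφ
  have hdeg : (Iu * φ).degree ≤ (2 * M + 1 : ℕ) :=
    (degree_mul_le_of_le hIdeg hφ).trans (by norm_cast; omega)
  have hφc : ContinuousOn (fun x => φ.eval x) (Icc (-1) 1) := φ.continuousOn
  have huφ : IntervalIntegrable (fun x => u x * φ.eval x) volume (-1) 1 :=
    (hu.mul hφc).intervalIntegrable_of_Icc (by norm_num)
  have hIuφ : IntervalIntegrable (fun x => Iu.eval x * φ.eval x) volume (-1) 1 :=
    (Iu.continuous.mul φ.continuous).intervalIntegrable _ _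
  rw [sum_weight_mul_mul_eq_integral_interpolant_mul hquad hI hdeg,
    ← intervalIntegral.integral_sub huφ hIuφ]
  simp only [← sub_mul]
  exact abs_intervalIntegral_mul_le_sqrt_mul_sqrt (by norm_num) (hu.sub Iu.continuousOn) hφc

/-- For a quadrature rule with distinct nodes `μ_m ∈ [-1,1]` exact for
polynomials of degree at most `2M+1`, a continuous `u` on `[-1,1]` with Lagrange
interpolant `Iu` at the nodes (degree ≤ M), and any polynomial `φ` of degree ≤ M,
the difference between the continuous and discrete inner products is bounded by
the `L²` interpolation error of `u` times the `L²` norm of `φ`. -/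
theorem quadrature_error_bound (M : ℕ) (μ ω : Fin (M + 1) → ℝ)
    (hμ : ∀ m, μ m ∈ Icc (-1 : ℝ) 1) (hμinj : Function.Injective μ)
    (hquad : ∀ p : Polynomial ℝ, p.degree ≤ (2 * M + 1 : ℕ) →
      ∑ m, ω m * p.eval (μ m) = ∫ x in (-1 : ℝ)..1, p.eval x)
    (u : ℝ → ℝ) (hu : ContinuousOn u (Icc (-1 : ℝ) 1))
    (Iu : Polynomial ℝ) (hIdeg : Iu.degree ≤ M)
    (hI : ∀ m, Iu.eval (μ m) = u (μ m)) :
    ∀ φ : Polynomial ℝ, φ.degree ≤ M →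
      |(∫ x in (-1 : ℝ)..1, u x * φ.eval x) - ∑ m, ω m * u (μ m) * φ.eval (μ m)|
        ≤ Real.sqrt (∫ x in (-1 : ℝ)..1, (u x - Iu.eval x) ^ 2)
            * Real.sqrt (∫ x in (-1 : ℝ)..1, (φ.eval x) ^ 2) :=
  quadrature_error_bound_general M μ ω hquad u hu Iu hIdeg hI
end
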